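/- For any real θ > 0 and positive integer n, θ{log(1+n/θ) - 2 + 3θ/(n+θ) - θ²/(n+θ)²} + n/(2(n+θ)) - 3 ≤ ∑_{i=1}^n p_i(1-p_i)(1-2p_i) ≤ θ{log(1+n/θ) - 2 + 3θ/(n+θ) - θ²/(n+θ)²} + 2 + n/(n+θ), where p_i = θ/(θ+i-1). -/

import Mathlib

open Real Finset

/-!
With `aᵢ = θ / (θ + i)` the summand is `aᵢ - 3 aᵢ² + 2 aᵢ³`, and each power sum `∑ aᵢᵏ` is
compared with `∫₀ⁿ (θ / (θ + x))ᵏ dx` through telescoping against the discrete antiderivatives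
`-θ log (θ + i)`, `θ aᵢ` and `θ aᵢ² / 2`. For the cubes the monotone comparison is too weak
for the lower bound, and the trapezoid bound, valid by convexity, is used instead.
-/

section Telescoping

variable {α : Type*} [AddCommGroup α]

theorem sum_range_succ_eq_sum_range_add_sub (f : ℕ → α) (n : ℕ) :
    ∑ i ∈ range n, f (i + 1) = ∑ i ∈ range n, f i + (f n - f 0) := by
  rw [add_sub, eq_sub_iff_add_eq, ← sum_range_succ, sum_range_succ']

variable [PartialOrder α] [IsOrderedAddMonoid α]

theorem sub_le_sum_range_of_sub_succ_le {f g : ℕ → α} {n : ℕ}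
    (h : ∀ i < n, g i - g (i + 1) ≤ f i) : g 0 - g n ≤ ∑ i ∈ range n, f i := by
  rw [← sum_range_sub']
  exact sum_le_sum fun i hi => h i (mem_range.1 hi)

theorem sum_range_le_sub_add_of_succ_le_sub {f g : ℕ → α} {n : ℕ}
    (h : ∀ i < n, f (i + 1) ≤ g i - g (i + 1)) :
    ∑ i ∈ range n, f i ≤ g 0 - g n + (f 0 - f n) := by
  have hshift : ∑ i ∈ range n, f (i + 1) ≤ g 0 - g n := by
    rw [← sum_range_sub']
    exact sum_le_sum fun i hi => h i (mem_range.1 hi)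
  rw [sum_range_succ_eq_sum_range_add_sub] at hshift
  calc ∑ i ∈ range n, f i = ∑ i ∈ range n, f i + (f n - f 0) + (f 0 - f n) := by abel
    _ ≤ g 0 - g n + (f 0 - f n) := by gcongr

end Telescoping

theorem sub_add_half_le_sum_range_of_sub_succ_le_avg {𝕜 : Type*} [Field 𝕜] [LinearOrder 𝕜]
    [IsStrictOrderedRing 𝕜] {f g : ℕ → 𝕜} {n : ℕ}
    (h : ∀ i < n, g i - g (i + 1) ≤ (f i + f (i + 1)) / 2) :
    g 0 - g n + (f 0 - f n) / 2 ≤ ∑ i ∈ range n, f i := by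
  have := sub_le_sum_range_of_sub_succ_le h
  rw [← sum_div, sum_add_distrib, sum_range_succ_eq_sum_range_add_sub] at this
  linarith

namespace Real

theorem inv_add_one_le_log_add_one_sub_log {x : ℝ} (hx : 0 < x) :
    (x + 1)⁻¹ ≤ log (x + 1) - log x := by
  have h := one_sub_inv_le_log_of_pos (x := (x + 1) / x) (by positivity)
  rw [log_div (by positivity) hx.ne', inv_div] at h
  convert h using 1
  field_simp; ring

theorem log_add_one_sub_log_le_inv {x : ℝ} (hx : 0 < x) :
    log (x + 1) - log x ≤ x⁻¹ := by
  have h := log_le_sub_one_of_pos (x := (x + 1) / x) (by positivity)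
  rw [log_div (by positivity) hx.ne'] at h
  convert h using 1
  field_simp; ring

end Real

section ShiftedPowerSums

variable {θ : ℝ}

theorem sum_range_div_add_mem_Icc (hθ : 0 < θ) (n : ℕ) :
    ∑ i ∈ range n, θ / (θ + i) ∈
      Set.Icc (θ * log (1 + n / θ)) (θ * log (1 + n / θ) + (1 - θ / (θ + n))) := by
  set g : ℕ → ℝ := fun i => -(θ * log (θ + i))
  have hg : g 0 - g n = θ * log (1 + n / θ) := by
    rw [show 1 + (n : ℝ) / θ = (θ + n) / θ by field_simp, log_div (by positivity) hθ.ne']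
    simp only [g, Nat.cast_zero, add_zero]; ring
  have hstep (i : ℕ) : g i - g (i + 1) = θ * (log ((θ + i) + 1) - log (θ + i)) := by
    simp only [g, Nat.cast_succ, add_assoc]; ring
  have hθi (i : ℕ) : 0 < θ + i := by positivity
  refine ⟨?_, ?_⟩
  · rw [← hg]
    refine sub_le_sum_range_of_sub_succ_le fun i _ => ?_
    rw [hstep, div_eq_mul_inv]
    exact mul_le_mul_of_nonneg_left (log_add_one_sub_log_le_inv (hθi i)) hθ.le
  · have := sum_range_le_sub_add_of_succ_le_sub (f := fun i : ℕ => θ / (θ + i)) (g := g) (n := n)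
      fun i _ => by
        rw [hstep, Nat.cast_succ, ← add_assoc, div_eq_mul_inv]
        exact mul_le_mul_of_nonneg_left (inv_add_one_le_log_add_one_sub_log (hθi i)) hθ.le
    simpa [hg, hθ.ne'] using this

theorem sum_range_div_add_sq_mem_Icc (hθ : 0 < θ) (n : ℕ) :
    ∑ i ∈ range n, (θ / (θ + i)) ^ 2 ∈
      Set.Icc (θ * (1 - θ / (θ + n))) (θ * (1 - θ / (θ + n)) + (1 - (θ / (θ + n)) ^ 2)) := by
  set g : ℕ → ℝ := fun i => θ * (θ / (θ + i))
  have hθi (i : ℕ) : 0 < θ + i := by positivity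
  have hstep (i : ℕ) : g i - g (i + 1) = θ ^ 2 / ((θ + i) * (θ + i + 1)) := by
    simp only [g, Nat.cast_succ]; field_simp; ring
  refine ⟨?_, ?_⟩
  · have := sub_le_sum_range_of_sub_succ_le (f := fun i : ℕ => (θ / (θ + i)) ^ 2) (g := g)
      (n := n) fun i _ => by
        rw [hstep, div_pow, sq (θ + i)]
        gcongr θ ^ 2 / (_ * ?_)
        linarith
    simpa [g, hθ.ne', mul_sub] using this
  · have := sum_range_le_sub_add_of_succ_le_sub (f := fun i : ℕ => (θ / (θ + i)) ^ 2) (g := g)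
      (n := n) fun i _ => by
        rw [hstep, Nat.cast_succ, ← add_assoc, div_pow, sq (θ + i + 1)]
        gcongr θ ^ 2 / (?_ * _)
        linarith
    simpa [g, hθ.ne', mul_sub] using this

theorem sum_range_div_add_cube_mem_Icc (hθ : 0 < θ) (n : ℕ) :
    ∑ i ∈ range n, (θ / (θ + i)) ^ 3 ∈
      Set.Icc (θ / 2 * (1 - (θ / (θ + n)) ^ 2) + (1 - (θ / (θ + n)) ^ 3) / 2)
        (θ / 2 * (1 - (θ / (θ + n)) ^ 2) + (1 - (θ / (θ + n)) ^ 3)) := by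
  set g : ℕ → ℝ := fun i => θ / 2 * (θ / (θ + i)) ^ 2
  have hθi (i : ℕ) : 0 < θ + i := by positivity
  have hstep (i : ℕ) : g i - g (i + 1) =
      θ ^ 3 * (2 * (θ + i) + 1) / (2 * (θ + i) ^ 2 * (θ + i + 1) ^ 2) := by
    simp only [g, Nat.cast_succ]; field_simp; ring
  refine ⟨?_, ?_⟩
  · have := sub_add_half_le_sum_range_of_sub_succ_le_avg (f := fun i : ℕ => (θ / (θ + i)) ^ 3)
      (g := g) (n := n) fun i _ => by
        have hx := hθi i
        rw [hstep, Nat.cast_succ, ← add_assoc, ← sub_nonneg]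
        have : ((θ / (θ + i)) ^ 3 + (θ / (θ + i + 1)) ^ 3) / 2 -
            θ ^ 3 * (2 * (θ + i) + 1) / (2 * (θ + i) ^ 2 * (θ + i + 1) ^ 2) =
            θ ^ 3 * (2 * (θ + i) + 1) / (2 * (θ + i) ^ 3 * (θ + i + 1) ^ 3) := by
          field_simp; ring
        rw [this]; positivity
    simpa [g, hθ.ne', mul_sub] using this
  · have := sum_range_le_sub_add_of_succ_le_sub (f := fun i : ℕ => (θ / (θ + i)) ^ 3) (g := g)
      (n := n) fun i _ => by
        have hx := hθi i
        rw [hstep, Nat.cast_succ, ← add_assoc, ← sub_nonneg]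
        have : θ ^ 3 * (2 * (θ + i) + 1) / (2 * (θ + i) ^ 2 * (θ + i + 1) ^ 2) -
            (θ / (θ + i + 1)) ^ 3 =
            θ ^ 3 * (3 * (θ + i) + 1) / (2 * (θ + i) ^ 2 * (θ + i + 1) ^ 3) := by
          field_simp; ring
        rw [this]; positivity
    simpa [g, hθ.ne', mul_sub] using this

end ShiftedPowerSums

theorem stmt_13_general (θ : ℝ) (hθ : 0 < θ) (n : ℕ) :
    θ * (Real.log (1 + n / θ) - 2 + 3 * θ / (n + θ) - θ ^ 2 / (n + θ) ^ 2)
        + n / (2 * (n + θ)) - 3 ≤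
      ∑ i ∈ Finset.range n, θ / (θ + i) * (1 - θ / (θ + i)) * (1 - 2 * (θ / (θ + i))) ∧
    ∑ i ∈ Finset.range n, θ / (θ + i) * (1 - θ / (θ + i)) * (1 - 2 * (θ / (θ + i))) ≤
      θ * (Real.log (1 + n / θ) - 2 + 3 * θ / (n + θ) - θ ^ 2 / (n + θ) ^ 2)
        + 2 + n / (n + θ) := by
  have hsum : ∑ i ∈ range n, θ / (θ + i) * (1 - θ / (θ + i)) * (1 - 2 * (θ / (θ + i))) =
      ∑ i ∈ range n, θ / (θ + i) - 3 * ∑ i ∈ range n, (θ / (θ + i)) ^ 2 +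
        2 * ∑ i ∈ range n, (θ / (θ + i)) ^ 3 := by
    simp only [mul_sum, ← sum_sub_distrib, ← sum_add_distrib]
    exact sum_congr rfl fun i _ => by ring
  obtain ⟨h1lo, h1hi⟩ := sum_range_div_add_mem_Icc hθ n
  obtain ⟨h2lo, h2hi⟩ := sum_range_div_add_sq_mem_Icc hθ n
  obtain ⟨h3lo, h3hi⟩ := sum_range_div_add_cube_mem_Icc hθ n
  have hθn : 0 < θ + n := by positivity
  set a := θ / (θ + n)
  have ha0 : 0 ≤ a := by positivity
  have ha1 : a ≤ 1 := div_le_one_of_le₀ (by simp) hθn.le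
  have h3a : 3 * θ / (n + θ) = 3 * a := by rw [add_comm, mul_div_assoc]
  have ha2 : θ ^ 2 / (n + θ) ^ 2 = a ^ 2 := by rw [add_comm, div_pow]
  have hna : n / (n + θ) = 1 - a := by
    rw [eq_sub_iff_add_eq, add_comm (n : ℝ), ← add_div, add_comm (n : ℝ), div_self hθn.ne']
  have hna2 : n / (2 * (n + θ)) = (1 - a) / 2 := by rw [← hna, div_div, mul_comm]
  rw [hsum, h3a, ha2, hna, hna2]
  constructor <;> nlinarith [mul_nonneg ha0 (sq_nonneg a)]

theorem stmt_13 (θ : ℝ) (hθ : 0 < θ) (n : ℕ) (hn : 1 ≤ n) :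
    θ * (Real.log (1 + n / θ) - 2 + 3 * θ / (n + θ) - θ ^ 2 / (n + θ) ^ 2)
        + n / (2 * (n + θ)) - 3 ≤
      ∑ i ∈ Finset.range n, θ / (θ + i) * (1 - θ / (θ + i)) * (1 - 2 * (θ / (θ + i))) ∧
    ∑ i ∈ Finset.range n, θ / (θ + i) * (1 - θ / (θ + i)) * (1 - 2 * (θ / (θ + i))) ≤
      θ * (Real.log (1 + n / θ) - 2 + 3 * θ / (n + θ) - θ ^ 2 / (n + θ) ^ 2)
        + 2 + n / (n + θ) :=
  stmt_13_general θ hθ n
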